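/- In the example game with the three-parameter space, the strategy profile (p,q,r)=(0,1,0) is a Nash equilibrium: ⟨Π^X(0,1,0)⟩ ≥ ⟨Π^X(p,1,0)⟩ for all p∈[0,1], and ⟨Π^Y(0,1,0)⟩ ≥ ⟨Π^Y(0,q,r)⟩ for all q,r∈[0,1], with equilibrium payoffs (2,2). -/
import Mathlib

/-- (p,q,r) = (0,1,0) is a Nash equilibrium of the example game in the
three-parameter space, with payoffs (2,2). -/
theorem stmt_8 :
    let payX : ℝ → ℝ → ℝ → ℝ := fun p q r => 3 - q + p * (q + 3 * r - 2);
    let payY : ℝ → ℝ → ℝ → ℝ := fun p q r => 1 + q - p * (q + r - 3);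
    (∀ p ∈ Set.Icc (0:ℝ) 1, payX 0 1 0 ≥ payX p 1 0) ∧
    (∀ q ∈ Set.Icc (0:ℝ) 1, ∀ r ∈ Set.Icc (0:ℝ) 1, payY 0 1 0 ≥ payY 0 q r) ∧
    payX 0 1 0 = 2 ∧ payY 0 1 0 = 2 := by
  refine ⟨fun p hp => ?_, fun q hq r hr => ?_, by norm_num, by norm_num⟩
  · simp only; nlinarith [hp.1, hp.2]
  · simp only; nlinarith [hq.1, hq.2, hr.1, hr.2]
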